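/- Let p, q, n, α, β, γ be natural numbers and let M11 : Matrix (Fin α) (Fin p), M12 : Matrix (Fin α) (Fin q), M13 : Matrix (Fin α) (Fin n), M21 : Matrix (Fin β) (Fin p), M22 : Matrix (Fin β) (Fin q), M23 : Matrix (Fin β) (Fin n), M31 : Matrix (Fin γ) (Fin p), M32 : Matrix (Fin γ) (Fin q), M41 : Matrix (Fin n) (Fin p), M43 : Matrix (Fin n) (Fin n) be matrices over ZMod 2. Suppose M43 is invertible, M13 * M43⁻¹ * M41 = 0, and M23 * M43⁻¹ * M41 = M21. Let A be the (α+β+γ+n) × (p+q+n) block matrix with block rows [M11 M12 M13], [0 M22 M23], [M31 M32 0], [M41 0 M43], and let B be the (α+β+γ) × (p+q) block matrix with block rows [M11 M12], [M21 M22], [M31 M32]. Then Matrix.rank A = Matrix.rank B + n. -/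

import Mathlib

open Matrix

/-!
Grouping the first three block rows and the first two block columns turns the matrix into
`[C D; E M43]` with `M43` invertible, whose rank is `n` plus the rank of the Schur complement `C - D * M43⁻¹ * E`. The hypotheses say
that `D * M43⁻¹ * E` is zero except for the block `M21` in the second block row, which over
`ZMod 2` turns the zero block of `C` into `M21`.
-/

theorem Submodule.finrank_prod {K V W : Type*} [Field K] [AddCommGroup V] [Module K V]
    [AddCommGroup W] [Module K W]
    (S : Submodule K V) (T : Submodule K W) [FiniteDimensional K S] [FiniteDimensional K T] :
    Module.finrank K (S.prod T) = Module.finrank K S + Module.finrank K T := by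
  have hinj : Function.Injective (S.subtype.prodMap T.subtype) := by
    rw [LinearMap.coe_prodMap]
    exact S.injective_subtype.prodMap T.injective_subtype
  rw [← Module.finrank_prod, ← LinearMap.finrank_range_of_inj hinj, LinearMap.range_prodMap,
    Submodule.range_subtype, Submodule.range_subtype]

namespace Matrix

variable {K : Type*} [Field K] {l m n o : Type*} [Fintype m] [Fintype n]

theorem mulVecLin_fromBlocks_zero_zero (A : Matrix l m K) (D : Matrix o n K) :
    (fromBlocks A 0 0 D).mulVecLin =
      (LinearEquiv.sumArrowLequivProdArrow l o K K).symm.toLinearMap ∘ₗ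
        (A.mulVecLin.prodMap D.mulVecLin) ∘ₗ
        (LinearEquiv.sumArrowLequivProdArrow m n K K).toLinearMap := by
  ext v i
  cases i <;> simp [fromBlocks_mulVec] <;> rfl

theorem rank_fromBlocks_zero_zero (A : Matrix l m K) (D : Matrix o n K) :
    (fromBlocks A 0 0 D).rank = A.rank + D.rank := by
  rw [rank, mulVecLin_fromBlocks_zero_zero, LinearMap.range_comp, LinearMap.range_comp,
    LinearEquiv.range, Submodule.map_top, LinearEquiv.finrank_map_eq, LinearMap.range_prodMap,
    Submodule.finrank_prod, rank, rank]

theorem rank_fromBlocks_of_isUnit₂₂ [Fintype l] [DecidableEq l] [DecidableEq m] [DecidableEq n]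
    (A : Matrix l m K) (B : Matrix l n K) (C : Matrix n m K) (D : Matrix n n K) (hD : IsUnit D) :
    (fromBlocks A B C D).rank = (A - B * D⁻¹ * C).rank + Fintype.card n := by
  let := hD.invertible
  rw [fromBlocks_eq_of_invertible₂₂, rank_mul_eq_left_of_isUnit_det,
    rank_mul_eq_right_of_isUnit_det, rank_fromBlocks_zero_zero, rank_of_isUnit D hD, invOf_eq_nonsing_inv]
  · simp
  · simp

end Matrix

/-- Block elimination identity underlying the proof of the main theorem:
`rank(M_{L''}) = rank(M_{L'}) + n` after a half twist. -/
theorem stmt_1 (p q n α β γ : ℕ)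
    (M11 : Matrix (Fin α) (Fin p) (ZMod 2)) (M12 : Matrix (Fin α) (Fin q) (ZMod 2))
    (M13 : Matrix (Fin α) (Fin n) (ZMod 2))
    (M21 : Matrix (Fin β) (Fin p) (ZMod 2)) (M22 : Matrix (Fin β) (Fin q) (ZMod 2))
    (M23 : Matrix (Fin β) (Fin n) (ZMod 2))
    (M31 : Matrix (Fin γ) (Fin p) (ZMod 2)) (M32 : Matrix (Fin γ) (Fin q) (ZMod 2))
    (M41 : Matrix (Fin n) (Fin p) (ZMod 2)) (M43 : Matrix (Fin n) (Fin n) (ZMod 2))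
    (hM43 : IsUnit M43)
    (h13 : M13 * M43⁻¹ * M41 = 0)
    (h23 : M23 * M43⁻¹ * M41 = M21) :
    Matrix.rank
      (Matrix.fromRows
        (Matrix.fromRows
          (Matrix.fromCols (Matrix.fromCols M11 M12) M13)
          (Matrix.fromCols (Matrix.fromCols 0 M22) M23))
        (Matrix.fromRows
          (Matrix.fromCols (Matrix.fromCols M31 M32) 0)
          (Matrix.fromCols (Matrix.fromCols M41 0) M43))) =
    Matrix.rank
      (Matrix.fromRows
        (Matrix.fromRows
          (Matrix.fromCols M11 M12)
          (Matrix.fromCols M21 M22))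
        (Matrix.fromCols M31 M32)) + n := by
  have hblocks : fromRows
        (fromRows (fromCols (fromCols M11 M12) M13) (fromCols (fromCols 0 M22) M23))
        (fromRows (fromCols (fromCols M31 M32) 0) (fromCols (fromCols M41 0) M43)) =
      (fromBlocks (fromRows (fromRows (fromCols M11 M12) (fromCols 0 M22)) (fromCols M31 M32))
        (fromRows (fromRows M13 M23) 0) (fromCols M41 0) M43).submatrix
        (Equiv.sumAssoc _ _ _).symm (Equiv.refl _) := by
    ext ((i | i) | i | i) ((j | j) | j) <;> rfl
  rw [hblocks, rank_submatrix, rank_fromBlocks_of_isUnit₂₂ _ _ _ _ hM43, Fintype.card_fin]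
  congr 2
  simp only [fromRows_mul, mul_fromCols, h13, h23, Matrix.zero_mul, Matrix.mul_zero]
  ext ((i | i) | i) (j | j) <;> simp [ZMod.neg_eq_self_mod_two]
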